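/- arXiv:1811.02259 — 2 statements merged into one kernel-verified Lean document; each statement's English description precedes it below -/
import Mathlib

section
/- For every loopless digraph G the following are equivalent: (1) G ∈ S_{1,2}; (2) G ∈ S_{1,ℓ} for some ℓ ≥ 2; (3) G contains no induced subdigraph isomorphic to co(2P2), to the edgeless digraph on two vertices, to the directed 3-cycle C3, or to D4. -/
/-- In sequence `q`, some entry of type `u` occurs strictly before some entry of type `v`. -/
def SeqBefore {V : Type*} (q : List V) (u v : V) : Prop :=
  ∃ l₁ l₂ l₃ : List V, q = l₁ ++ u :: (l₂ ++ v :: l₃)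

/-- The arc relation of the sequence digraph `g(Q)` of a set `Q` of sequences,
where sequences are recorded as the lists of the types of their items. -/
def GArc {V : Type*} (Q : List (List V)) (u v : V) : Prop :=
  u ≠ v ∧ ∃ q ∈ Q, SeqBefore q u v

/-- The digraph `(V, A)` belongs to the class `S_{k,ℓ}`: up to the relabelling
obtained by taking the types to be the vertices themselves, it is the sequence digraph
of a set of at most `k` sequences containing at most `ℓ` items of each type. -/
def MemS {V : Type*} [DecidableEq V] (A : V → V → Prop) (k ℓ : ℕ) : Prop :=
  ∃ Q : List (List V),
    Q.length ≤ k ∧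
    (∀ v : V, Q.flatten.count v ≤ ℓ) ∧
    (∀ v : V, ∃ q ∈ Q, v ∈ q) ∧
    (∀ u v : V, A u v ↔ GArc Q u v)

lemma seqBefore_of_split {V : Type*} {q a b : List V} {u v : V}
    (h : q = a ++ b) (hu : u ∈ a) (hv : v ∈ b) : SeqBefore q u v := by
  obtain ⟨s, t, rfl⟩ := List.append_of_mem hu
  obtain ⟨s', t', rfl⟩ := List.append_of_mem hv
  exact ⟨s, t ++ s', t', by simp [h, List.append_assoc]⟩

lemma eq_take_cons_drop {V : Type*} {l : List V} {n : ℕ} {a : V}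
    (h : l[n]? = some a) : l = l.take n ++ a :: l.drop (n + 1) := by
  obtain ⟨hn, hget⟩ := List.getElem?_eq_some_iff.mp h
  conv_lhs => rw [← List.take_append_drop n l, List.drop_eq_getElem_cons hn, hget]

lemma seqBefore_iff_get {V : Type*} {q : List V} {u v : V} :
    SeqBefore q u v ↔ ∃ i j : ℕ, i < j ∧ q[i]? = some u ∧ q[j]? = some v := by
  constructor
  · rintro ⟨l₁, l₂, l₃, rfl⟩
    refine ⟨l₁.length, l₁.length + l₂.length + 1, by omega, ?_, ?_⟩
    · rw [List.getElem?_append_right (le_refl _)]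
      simp
    · rw [List.getElem?_append_right (by omega)]
      have h : l₁.length + l₂.length + 1 - l₁.length = l₂.length + 1 := by omega
      rw [h]
      show (u :: (l₂ ++ v :: l₃))[l₂.length + 1]? = some v
      have : (l₂ ++ v :: l₃)[l₂.length]? = some v := by
        rw [List.getElem?_append_right (le_refl _)]; simp
      simpa using this
  · rintro ⟨i, j, hij, hu, hv⟩
    have h1 : q = q.take i ++ u :: q.drop (i + 1) := eq_take_cons_drop hu
    have hv' : (q.drop (i+1))[j - (i+1)]? = some v := by
      rw [List.getElem?_drop]
      have : i + 1 + (j - (i+1)) = j := by omega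
      rw [this]; exact hv
    have h2 := eq_take_cons_drop hv'
    refine ⟨q.take i, (q.drop (i+1)).take (j - (i+1)), (q.drop (i+1)).drop (j - (i+1) + 1), ?_⟩
    conv_lhs => rw [h1, h2]

lemma seqBefore_total {V : Type*} {q : List V} {u v : V}
    (hu : u ∈ q) (hv : v ∈ q) (huv : u ≠ v) : SeqBefore q u v ∨ SeqBefore q v u := by
  obtain ⟨s, t, rfl⟩ := List.append_of_mem hu
  rcases List.mem_append.mp hv with h | h
  · exact Or.inr (seqBefore_of_split rfl h (List.mem_cons_self (a := u) (l := t)))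
  · rcases List.mem_cons.mp h with h | h
    · exact absurd h.symm huv
    · exact Or.inl (seqBefore_of_split (a := s ++ [u]) (b := t) (by simp) (by simp) h)

lemma three_of_single {V : Type*} (q : List V) (A : V → V → Prop)
    (hmem : ∀ v : V, v ∈ q)
    (hA : ∀ u v, A u v ↔ u ≠ v ∧ SeqBefore q u v) :
    (¬ ∃ a b c d : V, a ≠ b ∧ a ≠ c ∧ a ≠ d ∧ b ≠ c ∧ b ≠ d ∧ c ≠ d ∧
        A a b ∧ A b a ∧ A a c ∧ ¬ A c a ∧ A a d ∧ A d a ∧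
        A b c ∧ A c b ∧ A b d ∧ ¬ A d b ∧ A c d ∧ A d c) ∧
    (¬ ∃ u v : V, u ≠ v ∧ ¬ A u v ∧ ¬ A v u) ∧
    (¬ ∃ x y z : V, x ≠ y ∧ y ≠ z ∧ x ≠ z ∧
        A x y ∧ A y z ∧ A z x ∧ ¬ A y x ∧ ¬ A z y ∧ ¬ A x z) ∧
    (¬ ∃ x y z : V, x ≠ y ∧ y ≠ z ∧ x ≠ z ∧
        A x y ∧ A y z ∧ A z x ∧ A y x ∧ ¬ A z y ∧ ¬ A x z) := by
  have hR : ∀ u v : V, A u v →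
      ∃ i j : ℕ, i < j ∧ q[i]? = some u ∧ q[j]? = some v := by
    intro u v h
    exact seqBefore_iff_get.mp ((hA u v).mp h).2
  have hN : ∀ u v : V, u ≠ v → ¬ A u v →
      ∀ i j : ℕ, q[i]? = some u → q[j]? = some v → j < i := by
    intro u v hne h i j hi hj
    have hij : i ≠ j := by
      intro e; rw [e, hj] at hi; exact hne (Option.some_injective _ hi).symm
    have : ¬ i < j := by
      intro hlt
      exact h ((hA u v).mpr ⟨hne, seqBefore_iff_get.mpr ⟨i, j, hlt, hi, hj⟩⟩)
    omega
  have key3 : ∀ x y z : V, x ≠ z → y ≠ z →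
      A x y → ¬ A z y → ¬ A x z → False := by
    intro x y z hxz hyz hxy hzy hxz'
    obtain ⟨i, j, hij, hi, hj⟩ := hR x y hxy
    obtain ⟨k, hk⟩ := List.mem_iff_getElem?.mp (hmem z)
    have h1 := hN z y (Ne.symm hyz) hzy k j hk hj
    have h2 := hN x z hxz hxz' i k hi hk
    omega
  refine ⟨?_, ?_, ?_, ?_⟩
  · rintro ⟨a, b, c, d, hab, hac, had, hbc, hbd, hcd, -, -, -, hca, -, hda, -, hcb, -, hdb, -, -⟩
    obtain ⟨i, j, hij, hi, hj⟩ := hR d a hda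
    obtain ⟨k, m, hkm, hk, hm⟩ := hR c b hcb
    have h1 := hN c a (Ne.symm hac) hca k j hk hj
    have h2 := hN d b (Ne.symm hbd) hdb i m hi hm
    omega
  · rintro ⟨u, v, hne, h1, h2⟩
    obtain ⟨i, hi⟩ := List.mem_iff_getElem?.mp (hmem u)
    obtain ⟨j, hj⟩ := List.mem_iff_getElem?.mp (hmem v)
    have k1 := hN u v hne h1 i j hi hj
    have k2 := hN v u hne.symm h2 j i hj hi
    omega
  · rintro ⟨x, y, z, hxy, hyz, hxz, hAxy, -, -, -, hzy, hxz'⟩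
    exact key3 x y z hxz hyz hAxy hzy hxz'
  · rintro ⟨x, y, z, hxy, hyz, hxz, hAxy, -, -, -, hzy, hxz'⟩
    exact key3 x y z hxz hyz hAxy hzy hxz'

lemma seqBefore_split {V : Type*} {q : List V} {u v : V} (h : SeqBefore q u v) :
    ∃ a b, q = a ++ b ∧ u ∈ a ∧ v ∈ b := by
  obtain ⟨l₁, l₂, l₃, rfl⟩ := h
  exact ⟨l₁ ++ [u], l₂ ++ v :: l₃, by simp, by simp, by simp⟩

lemma sum_map_add_nat (l : List ℕ) (f g : ℕ → ℕ) :
    (l.map (fun x => f x + g x)).sum = (l.map f).sum + (l.map g).sum := by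
  induction l with
  | nil => simp
  | cons a l ih => simp [ih]; ring

lemma sum_indicator_range (n c : ℕ) (h : c < n) :
    ((List.range n).map (fun t => if c = t then (1:ℕ) else 0)).sum = 1 := by
  induction n with
  | zero => omega
  | succ n ih =>
    rw [List.range_succ]
    simp only [List.map_append, List.sum_append]
    rcases Nat.lt_or_ge c n with h' | h'
    · have hcn : ¬ c = n := by omega
      rw [ih h']; simp [hcn]
    · have hc : c = n := by omega
      subst hc
      have hz : ∀ t ∈ List.range c, ¬ (c = t) := by simp [List.mem_range]; omega
      rw [List.map_congr_left (fun t ht => if_neg (hz t ht))]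
      simp

lemma mems_of_interval {V : Type*} [Fintype V] [DecidableEq V]
    (A : V → V → Prop) (s e : V → ℕ) (N : ℕ)
    (hse : ∀ v, s v ≤ e v) (heN : ∀ v, e v ≤ N)
    (hA : ∀ u v, A u v ↔ (u ≠ v ∧ s u ≤ e v)) : MemS A 1 2 := by
  classical
  set elems := (Finset.univ : Finset V).toList with helems
  set Sf : ℕ → List V := fun t => elems.filter (fun v => s v = t) with hSf
  set Ef : ℕ → List V := fun t => elems.filter (fun v => e v = t) with hEf
  set block : ℕ → List V := fun t => Sf t ++ Ef t with hblock
  set q : List V := (List.range (N+1)).flatMap block with hq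
  have hmemelems : ∀ v : V, v ∈ elems := by
    intro v; simp [helems]
  have hcnt1 : ∀ v : V, elems.count v = 1 := fun v =>
    List.count_eq_one_of_mem (Finset.nodup_toList _) (hmemelems v)
  -- membership facts
  have hmemS : ∀ v t, v ∈ Sf t ↔ s v = t := by
    intro v t; simp [hSf, List.mem_filter, hmemelems]
  have hmemE : ∀ v t, v ∈ Ef t ↔ e v = t := by
    intro v t; simp [hEf, List.mem_filter, hmemelems]
  refine ⟨[q], by simp, ?_, ?_, ?_⟩
  · -- counts
    intro v
    have hcS : ∀ t, (Sf t).count v = if s v = t then 1 else 0 := by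
      intro t
      by_cases h : s v = t
      · rw [if_pos h, hSf]
        rw [List.count_filter (by simp [h])]
        exact hcnt1 v
      · rw [if_neg h]
        exact List.count_eq_zero.mpr (fun hm => h ((hmemS v t).mp hm))
    have hcE : ∀ t, (Ef t).count v = if e v = t then 1 else 0 := by
      intro t
      by_cases h : e v = t
      · rw [if_pos h, hEf]
        rw [List.count_filter (by simp [h])]
        exact hcnt1 v
      · rw [if_neg h]
        exact List.count_eq_zero.mpr (fun hm => h ((hmemE v t).mp hm))
    have : q.count v = 2 := by
      rw [hq, List.count_flatMap]
      have : (List.map (List.count v ∘ block) (List.range (N+1))) =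
          (List.range (N+1)).map (fun t => (if s v = t then 1 else 0) + (if e v = t then 1 else 0)) := by
        apply List.map_congr_left
        intro t _
        simp only [Function.comp_apply, hblock, List.count_append, hcS t, hcE t]
      rw [this, sum_map_add_nat, sum_indicator_range _ _ (by have := hse v; have := heN v; omega),
        sum_indicator_range _ _ (by have := heN v; omega)]
    simp only [List.flatten_cons, List.flatten_nil, List.append_nil]
    omega
  · -- coverage
    intro v
    refine ⟨q, by simp, ?_⟩
    rw [hq]
    refine List.mem_flatMap.mpr ⟨s v, ?_, ?_⟩
    · simp [List.mem_range]; have := hse v; have := heN v; omega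
    · rw [hblock]
      exact List.mem_append_left _ ((hmemS v (s v)).mpr rfl)
  · -- arc condition
    intro u v
    have hGA : GArc [q] u v ↔ u ≠ v ∧ SeqBefore q u v := by
      simp [GArc]
    rw [hA, hGA]
    constructor
    · rintro ⟨hne, hle⟩
      refine ⟨hne, ?_⟩
      -- split at block (s u)
      have hrange : List.range (N+1) =
          List.range (s u) ++ (s u) :: List.range' (s u + 1) (N - s u) := by
        have h1 : s u ≤ N := le_trans (hse u) (heN u)
        rw [List.range_eq_range']
        have := List.range'_append (s := 0) (m := s u) (n := N + 1 - s u) (step := 1)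
        simp only [one_mul, zero_add] at this
        rw [← (by omega : s u + (N + 1 - s u) = N + 1), ← this]
        congr 1
        · rw [List.range_eq_range']
        · rw [(by omega : N + 1 - s u = (N - s u) + 1), List.range'_succ]
      have hqeq : q = ((List.range (s u)).flatMap block ++ Sf (s u)) ++
          (Ef (s u) ++ (List.range' (s u + 1) (N - s u)).flatMap block) := by
        rw [hq, hrange, List.flatMap_append, List.flatMap_cons]
        simp only [hblock, List.append_assoc]
      refine seqBefore_of_split hqeq ?_ ?_
      · exact List.mem_append_right _ ((hmemS u (s u)).mpr rfl)
      · rcases Nat.eq_or_lt_of_le hle with h | h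
        · exact List.mem_append_left _ ((hmemE v (s u)).mpr h.symm)
        · refine List.mem_append_right _ (List.mem_flatMap.mpr ⟨e v, ?_, ?_⟩)
          · rw [List.mem_range'_1]
            have := heN v; omega
          · exact List.mem_append_right _ ((hmemE v (e v)).mpr rfl)
    · rintro ⟨hne, hSB⟩
      refine ⟨hne, ?_⟩
      by_contra hlt
      push_neg at hlt
      -- all occurrences of v are before all occurrences of u
      set C1 : List V := (List.range (e v + 1)).flatMap block with hC1
      set C2 : List V := (List.range' (e v + 1) (N - e v)).flatMap block with hC2
      have hqeq : q = C1 ++ C2 := by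
        rw [hq, hC1, hC2, ← List.flatMap_append]
        congr 1
        have h1 : e v ≤ N := heN v
        rw [List.range_eq_range', List.range_eq_range']
        have := List.range'_append (s := 0) (m := e v + 1) (n := N - e v) (step := 1)
        simp only [one_mul, zero_add] at this
        rw [this, (by omega : e v + 1 + (N - e v) = N + 1)]
      have huC1 : u ∉ C1 := by
        rw [hC1]
        intro hm
        obtain ⟨t, ht, hmem⟩ := List.mem_flatMap.mp hm
        rw [List.mem_range] at ht
        rcases List.mem_append.mp hmem with h | h
        · have := (hmemS u t).mp h; omega
        · have := (hmemE u t).mp h; have := hse u; omega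
      have hvC2 : v ∉ C2 := by
        rw [hC2]
        intro hm
        obtain ⟨t, ht, hmem⟩ := List.mem_flatMap.mp hm
        rw [List.mem_range'_1] at ht
        rcases List.mem_append.mp hmem with h | h
        · have := (hmemS v t).mp h; have := hse v; omega
        · have := (hmemE v t).mp h; omega
      obtain ⟨a, b, hab, hua, hvb⟩ := seqBefore_split hSB
      rw [hqeq] at hab
      rcases List.append_eq_append_iff.mp hab.symm with ⟨c, hc1, hc2⟩ | ⟨c, hc1, hc2⟩
      · exact huC1 (by rw [hc1]; exact List.mem_append_left _ hua)
      · exact hvC2 (by rw [hc2]; exact List.mem_append_right _ hvb)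

namespace Stmt2Aux

variable {V : Type*} [Fintype V] [DecidableEq V]

def Prec (A : V → V → Prop) (u v : V) : Prop := u ≠ v ∧ ¬ A v u

open Classical in
noncomputable def Dn (A : V → V → Prop) (v : V) : Finset V :=
  Finset.univ.filter (fun x => Prec A x v)

noncomputable def sFun (A : V → V → Prop) (v : V) : ℕ := (Dn A v).card

open Classical in
noncomputable def Up (A : V → V → Prop) (v : V) : Finset V :=
  Finset.univ.filter (fun w => Prec A v w)

open Classical in
noncomputable def eFun (A : V → V → Prop) (N : ℕ) (v : V) : ℕ :=
  if h : (Up A v).Nonempty then (((Up A v).image (sFun A)).min' (h.image _)) - 1 else N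

lemma mem_Dn {A : V → V → Prop} {x v : V} : x ∈ Dn A v ↔ Prec A x v := by
  simp [Dn]

lemma mem_Up {A : V → V → Prop} {v w : V} : w ∈ Up A v ↔ Prec A v w := by
  simp [Up]

section

variable {A : V → V → Prop} (hl : Irreflexive A)
  (hsemi : ∀ u v : V, u ≠ v → A u v ∨ A v u)

include hsemi in
lemma prec_trans
    (hC3 : ¬ ∃ x y z : V, x ≠ y ∧ y ≠ z ∧ x ≠ z ∧
        A x y ∧ A y z ∧ A z x ∧ ¬ A y x ∧ ¬ A z y ∧ ¬ A x z)
    (hD4 : ¬ ∃ x y z : V, x ≠ y ∧ y ≠ z ∧ x ≠ z ∧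
        A x y ∧ A y z ∧ A z x ∧ A y x ∧ ¬ A z y ∧ ¬ A x z)
    {u v w : V} (h1 : Prec A u v) (h2 : Prec A v w) : Prec A u w := by
  obtain ⟨huv, hvu⟩ := h1
  obtain ⟨hvw, hwv⟩ := h2
  have hAuv : A u v := (hsemi u v huv).resolve_right hvu
  have hAvw : A v w := (hsemi v w hvw).resolve_right hwv
  have huw : u ≠ w := by rintro rfl; exact hwv hAuv
  refine ⟨huw, fun hAwu => ?_⟩
  by_cases hAuw : A u w
  · exact hD4 ⟨w, u, v, Ne.symm huw, huv, Ne.symm hvw, hAwu, hAuv, hAvw, hAuw, hvu, hwv⟩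
  · exact hC3 ⟨u, v, w, huv, hvw, huw, hAuv, hAvw, hAwu, hvu, hwv, hAuw⟩

include hsemi in
lemma digon_of_incomp {u v : V} (h1 : ¬ Prec A u v) (h2 : ¬ Prec A v u) (hne : u ≠ v) :
    A u v ∧ A v u := by
  constructor
  · by_contra h; exact h2 ⟨Ne.symm hne, h⟩
  · by_contra h; exact h1 ⟨hne, h⟩

include hl hsemi in
lemma Dn_linear
    (h2P2 : ¬ ∃ a b c d : V, a ≠ b ∧ a ≠ c ∧ a ≠ d ∧ b ≠ c ∧ b ≠ d ∧ c ≠ d ∧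
        A a b ∧ A b a ∧ A a c ∧ ¬ A c a ∧ A a d ∧ A d a ∧
        A b c ∧ A c b ∧ A b d ∧ ¬ A d b ∧ A c d ∧ A d c)
    (hT : ∀ {x y z : V}, Prec A x y → Prec A y z → Prec A x z)
    (u v : V) : Dn A u ⊆ Dn A v ∨ Dn A v ⊆ Dn A u := by
  by_contra hcon
  push_neg at hcon
  obtain ⟨hnuv, hnvu⟩ := hcon
  obtain ⟨a, ha, hnav⟩ := Finset.not_subset.mp hnuv
  obtain ⟨b, hb, hnbu⟩ := Finset.not_subset.mp hnvu
  rw [mem_Dn] at ha hb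
  rw [mem_Dn] at hnav hnbu
  -- ha : Prec A a u, hnav : ¬ Prec A a v, hb : Prec A b v, hnbu : ¬ Prec A b u
  have hab : a ≠ b := by rintro rfl; exact hnbu ha
  have hau : a ≠ u := ha.1
  have hav : a ≠ v := by rintro rfl; exact hnbu (hT hb ha)
  have hbu : b ≠ u := by rintro rfl; exact hnav (hT ha hb)
  have hbv : b ≠ v := hb.1
  have huv : u ≠ v := by rintro rfl; exact hnav ha
  have dab : A a b ∧ A b a :=
    digon_of_incomp hsemi (fun h => hnav (hT h hb)) (fun h => hnbu (hT h ha)) hab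
  have dav : A a v ∧ A v a :=
    digon_of_incomp hsemi hnav (fun h => hnbu (hT hb (hT h ha))) hav
  have dbu : A b u ∧ A u b :=
    digon_of_incomp hsemi hnbu (fun h => hnav (hT ha (hT h hb))) hbu
  have duv : A u v ∧ A v u :=
    digon_of_incomp hsemi (fun h => hnav (hT ha h)) (fun h => hnbu (hT hb h)) huv
  have hAau : A a u := (hsemi a u hau).resolve_right ha.2
  have hAbv : A b v := (hsemi b v hbv).resolve_right hb.2
  exact h2P2 ⟨a, b, u, v, hab, hau, hav, hbu, hbv, huv,
    dab.1, dab.2, hAau, ha.2, dav.1, dav.2, dbu.1, dbu.2, hAbv, hb.2, duv.1, duv.2⟩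

end

section

variable {A : V → V → Prop}

lemma sFun_le_card (v : V) : sFun A v ≤ Fintype.card V := by
  rw [sFun, ← Finset.card_univ]
  exact Finset.card_le_card (Finset.subset_univ _)

lemma one_le_min' {v : V} (h : (Up A v).Nonempty) :
    1 ≤ ((Up A v).image (sFun A)).min' (h.image _) := by
  obtain ⟨w, hw, hsw⟩ := Finset.mem_image.mp (((Up A v).image (sFun A)).min'_mem (h.image _))
  rw [← hsw]
  rw [sFun]
  exact Finset.card_pos.mpr ⟨v, mem_Dn.mpr (mem_Up.mp hw)⟩

lemma eFun_lt_of_prec {v w : V} (h : Prec A v w) :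
    eFun A (Fintype.card V) v < sFun A w := by
  have hne : (Up A v).Nonempty := ⟨w, mem_Up.mpr h⟩
  rw [eFun, dif_pos hne]
  have h1 := one_le_min' hne
  have h2 : ((Up A v).image (sFun A)).min' (hne.image _) ≤ sFun A w :=
    Finset.min'_le _ _ (Finset.mem_image_of_mem _ (mem_Up.mpr h))
  omega

lemma prec_of_eFun_lt
    (hlin : ∀ u v : V, Dn A u ⊆ Dn A v ∨ Dn A v ⊆ Dn A u)
    {u v : V} (h : eFun A (Fintype.card V) v < sFun A u) : Prec A v u := by
  by_cases hne : (Up A v).Nonempty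
  · rw [eFun, dif_pos hne] at h
    have h1 := one_le_min' hne
    obtain ⟨w₀, hw₀, hsw₀⟩ := Finset.mem_image.mp (((Up A v).image (sFun A)).min'_mem (hne.image _))
    have hvw₀ : Prec A v w₀ := mem_Up.mp hw₀
    have hcard : sFun A w₀ ≤ sFun A u := by omega
    have hvmem : v ∈ Dn A w₀ := mem_Dn.mpr hvw₀
    rcases hlin w₀ u with hs | hs
    · exact mem_Dn.mp (hs hvmem)
    · have : Dn A u = Dn A w₀ := Finset.eq_of_subset_of_card_le hs hcard
      exact mem_Dn.mp (this ▸ hvmem)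
  · rw [eFun, dif_neg hne] at h
    exact absurd (sFun_le_card (A := A) u) (by omega)

lemma sFun_le_eFun
    (hT : ∀ {x y z : V}, Prec A x y → Prec A y z → Prec A x z)
    (hl : Irreflexive A) (v : V) :
    sFun A v ≤ eFun A (Fintype.card V) v := by
  by_cases hne : (Up A v).Nonempty
  · rw [eFun, dif_pos hne]
    have : ∀ m ∈ (Up A v).image (sFun A), sFun A v < m := by
      intro m hm
      obtain ⟨w, hw, rfl⟩ := Finset.mem_image.mp hm
      have hvw : Prec A v w := mem_Up.mp hw
      have hsub : Dn A v ⊆ Dn A w := by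
        intro x hx
        exact mem_Dn.mpr (hT (mem_Dn.mp hx) hvw)
      have hne' : Dn A v ≠ Dn A w := by
        intro h
        have : v ∈ Dn A v := h ▸ mem_Dn.mpr hvw
        exact (mem_Dn.mp this).1 rfl
      exact Finset.card_lt_card (hsub.ssubset_of_ne hne')
    have := this _ (((Up A v).image (sFun A)).min'_mem (hne.image _))
    omega
  · rw [eFun, dif_neg hne]
    exact sFun_le_card v

lemma eFun_le_card (v : V) : eFun A (Fintype.card V) v ≤ Fintype.card V := by
  by_cases hne : (Up A v).Nonempty
  · rw [eFun, dif_pos hne]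
    obtain ⟨w, hw, hsw⟩ := Finset.mem_image.mp (((Up A v).image (sFun A)).min'_mem (hne.image _))
    have := sFun_le_card (A := A) w
    omega
  · rw [eFun, dif_neg hne]

end

end Stmt2Aux


open Stmt2Aux in
/-- For every loopless digraph `G = (V, A)` the following are equivalent:
(1) `G ∈ S_{1,2}`; (2) `G ∈ S_{1,ℓ}` for some `ℓ ≥ 2`; (3) `G` has no induced subdigraph
isomorphic to `co(2P2)`, to the edgeless digraph on two vertices, to the directed
3-cycle `C3`, or to `D4`. -/
theorem stmt2 {V : Type*} [Fintype V] [DecidableEq V]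
    (A : V → V → Prop) (hloopless : Irreflexive A) :
    List.TFAE
      [ MemS A 1 2,
        (∃ ℓ : ℕ, 2 ≤ ℓ ∧ MemS A 1 ℓ),
        -- no induced copy of `co(2P2)`
        (¬ ∃ a b c d : V, a ≠ b ∧ a ≠ c ∧ a ≠ d ∧ b ≠ c ∧ b ≠ d ∧ c ≠ d ∧
            A a b ∧ A b a ∧ A a c ∧ ¬ A c a ∧ A a d ∧ A d a ∧
            A b c ∧ A c b ∧ A b d ∧ ¬ A d b ∧ A c d ∧ A d c) ∧
        -- no induced edgeless digraph on two vertices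
        (¬ ∃ u v : V, u ≠ v ∧ ¬ A u v ∧ ¬ A v u) ∧
        -- no induced directed 3-cycle `C3`
        (¬ ∃ x y z : V, x ≠ y ∧ y ≠ z ∧ x ≠ z ∧
            A x y ∧ A y z ∧ A z x ∧ ¬ A y x ∧ ¬ A z y ∧ ¬ A x z) ∧
        -- no induced copy of `D4`
        (¬ ∃ x y z : V, x ≠ y ∧ y ≠ z ∧ x ≠ z ∧
            A x y ∧ A y z ∧ A z x ∧ A y x ∧ ¬ A z y ∧ ¬ A x z) ] := by
  tfae_have 1 → 2 := fun h => ⟨2, le_refl 2, h⟩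
  tfae_have 2 → 3 := by
    rintro ⟨ℓ, -, Q, hlen, -, hcov, hArc⟩
    rcases Q with _ | ⟨q, Q'⟩
    · have hFalse : ∀ v : V, False := fun v => by
        obtain ⟨q, hq, -⟩ := hcov v; simp at hq
      refine ⟨?_, ?_, ?_, ?_⟩ <;> rintro ⟨x, -⟩ <;> exact hFalse x
    · rcases Q' with _ | ⟨q2, Q''⟩
      · have hmem : ∀ v : V, v ∈ q := by
          intro v
          obtain ⟨q', hq', hv⟩ := hcov v
          simp only [List.mem_singleton] at hq'
          rwa [hq'] at hv
        have hA : ∀ u v, A u v ↔ u ≠ v ∧ SeqBefore q u v := by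
          intro u v; rw [hArc]; simp [GArc]
        exact three_of_single q A hmem hA
      · simp at hlen
  tfae_have 3 → 1 := by
    rintro ⟨h2P2, h2, hC3, hD4⟩
    have hsemi : ∀ u v : V, u ≠ v → A u v ∨ A v u := by
      intro u v h
      by_contra hc
      push_neg at hc
      exact h2 ⟨u, v, h, hc.1, hc.2⟩
    have hT : ∀ {x y z : V}, Prec A x y → Prec A y z → Prec A x z :=
      fun h1 h2 => prec_trans hsemi hC3 hD4 h1 h2
    have hlin := Dn_linear hloopless hsemi h2P2 hT
    apply mems_of_interval A (sFun A) (eFun A (Fintype.card V)) (Fintype.card V)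
      (sFun_le_eFun hT hloopless) eFun_le_card
    intro u v
    constructor
    · intro hA'
      have hne : u ≠ v := fun h => hloopless u (h ▸ hA')
      refine ⟨hne, ?_⟩
      by_contra hle
      push_neg at hle
      exact (prec_of_eFun_lt hlin hle).2 hA'
    · rintro ⟨hne, hle⟩
      have hnp : ¬ Prec A v u := fun hp => absurd (eFun_lt_of_prec hp) (by omega)
      by_contra h
      exact hnp ⟨Ne.symm hne, h⟩
  tfae_finish
end

section
/- Let G = (V,E) be a triangle-free undirected simple graph with |E| ≥ 2, with maximum vertex degree Δ(G) = ℓ, and in which every vertex is incident with at least one edge, and let G' be an orientation of G (a digraph obtained by replacing each edge {u,v} ∈ E by exactly one of the arcs (u,v), (v,u)). Then G' ∈ S_{|E|, ℓ}, but G' ∉ S_{k', ℓ'} whenever k' < |E| or ℓ' < ℓ. -/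
lemma seqBefore_mem {V : Type*} {q : List V} {u v : V} (h : SeqBefore q u v) :
    u ∈ q ∧ v ∈ q := by
  obtain ⟨l₁, l₂, l₃, rfl⟩ := h
  constructor <;> simp

lemma seqBefore_or {V : Type*} {q : List V} {u v : V} (hu : u ∈ q) (hv : v ∈ q)
    (hne : u ≠ v) : SeqBefore q u v ∨ SeqBefore q v u := by
  induction q with
  | nil => simp at hu
  | cons a t ih =>
    rcases eq_or_ne u a with rfl | hua
    · have hv' : v ∈ t := by
        rcases List.mem_cons.mp hv with h | h
        · exact absurd h.symm hne
        · exact h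
      obtain ⟨s, r, rfl⟩ := List.append_of_mem hv'
      exact Or.inl ⟨[], s, r, by simp⟩
    · rcases eq_or_ne v a with rfl | hva
      · have hu' : u ∈ t := by
          rcases List.mem_cons.mp hu with h | h
          · exact absurd h hua
          · exact h
        obtain ⟨s, r, rfl⟩ := List.append_of_mem hu'
        exact Or.inr ⟨[], s, r, by simp⟩
      · have hu' : u ∈ t := (List.mem_cons.mp hu).resolve_left hua
        have hv' : v ∈ t := (List.mem_cons.mp hv).resolve_left hva
        rcases ih hu' hv' with ⟨l₁, l₂, l₃, rfl⟩ | ⟨l₁, l₂, l₃, rfl⟩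
        · exact Or.inl ⟨a :: l₁, l₂, l₃, by simp⟩
        · exact Or.inr ⟨a :: l₁, l₂, l₃, by simp⟩

lemma seqBefore_pair {V : Type*} {u v a b : V} (h : SeqBefore [a, b] u v) :
    a = u ∧ b = v := by
  obtain ⟨l₁, l₂, l₃, heq⟩ := h
  have hlen : ([a, b] : List V).length = (l₁ ++ u :: (l₂ ++ v :: l₃)).length := by rw [heq]
  simp [List.length_append] at hlen
  have h1 : l₁ = [] := List.length_eq_zero_iff.mp (by omega)
  have h2 : l₂ = [] := List.length_eq_zero_iff.mp (by omega)
  have h3 : l₃ = [] := List.length_eq_zero_iff.mp (by omega)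
  subst h1; subst h2; subst h3
  simp at heq
  exact ⟨heq.1, heq.2⟩

lemma count_ge_filter {V : Type*} [DecidableEq V] (L : List (List V)) (v : V) :
    (L.toFinset.filter (fun q => v ∈ q)).card ≤ L.flatten.count v := by
  induction L with
  | nil => simp
  | cons q t ih =>
    rw [List.flatten_cons, List.count_append, List.toFinset_cons, Finset.filter_insert]
    by_cases hv : v ∈ q
    · rw [if_pos hv]
      have h1 : 1 ≤ q.count v := List.count_pos_iff.mpr hv
      have h2 := Finset.card_insert_le q (t.toFinset.filter (fun q => v ∈ q))
      omega
    · rw [if_neg hv]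
      have h0 : q.count v = 0 := by
        simp [List.count_eq_zero]
        intro h; exact hv h
      omega

/-- Let `G = (V, E)` be a triangle-free undirected simple graph with
`|E| ≥ 2`, maximum degree `Δ(G) = ℓ`, and no isolated vertices, and let `G'` (with arc
relation `A`) be an orientation of `G`. Then `G' ∈ S_{|E|, ℓ}`, but `G' ∉ S_{k',ℓ'}`
whenever `k' < |E|` or `ℓ' < ℓ`. -/
theorem stmt13 {V : Type*} [Fintype V] [DecidableEq V]
    (G : SimpleGraph V) [DecidableRel G.Adj]
    (htrianglefree : G.CliqueFree 3)
    (hE : 2 ≤ G.edgeFinset.card)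
    (ℓ : ℕ) (hmax : G.maxDegree = ℓ)
    (hnoisolated : ∀ v : V, 0 < G.degree v)
    (A : V → V → Prop)
    (horient : ∀ u v : V, (A u v → G.Adj u v) ∧ (G.Adj u v → Xor' (A u v) (A v u))) :
    MemS A G.edgeFinset.card ℓ ∧
      ∀ k' ℓ' : ℕ, k' < G.edgeFinset.card ∨ ℓ' < ℓ → ¬ MemS A k' ℓ' := by
  classical
  constructor
  · -- membership in S_{|E|, ℓ}
    set f : Sym2 V → List V := fun e =>
      if A (Quot.out e).1 (Quot.out e).2 then [(Quot.out e).1, (Quot.out e).2]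
      else [(Quot.out e).2, (Quot.out e).1] with hfdef
    have hfeq : ∀ u v : V, G.Adj u v → A u v → f s(u, v) = [u, v] := by
      intro u v hadj hA
      have hnAvu : ¬ A v u := by
        rcases (horient u v).2 hadj with ⟨_, h⟩ | ⟨h, h'⟩
        · exact h
        · exact absurd hA h'
      have hout : Quot.mk _ (Quot.out s(u, v)) = s(u, v) := Quot.out_eq _
      have hout' : s((Quot.out s(u,v)).1, (Quot.out s(u,v)).2) = s(u, v) := by
        conv_rhs => rw [← hout]
      rcases Sym2.eq_iff.mp hout' with ⟨h1, h2⟩ | ⟨h1, h2⟩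
      · simp only [hfdef, h1, h2, if_pos hA]
      · simp only [hfdef, h1, h2, if_neg hnAvu]
    have hfe : ∀ e ∈ G.edgeFinset, ∃ u v : V, e = s(u, v) ∧ G.Adj u v ∧ A u v ∧ f e = [u, v] := by
      intro e he
      induction e using Sym2.ind with
      | _ x y =>
        have hadj : G.Adj x y := by
          rwa [SimpleGraph.mem_edgeFinset, SimpleGraph.mem_edgeSet] at he
        rcases (horient x y).2 hadj with ⟨hA, _⟩ | ⟨hA, _⟩
        · exact ⟨x, y, rfl, hadj, hA, hfeq x y hadj hA⟩
        · exact ⟨y, x, Sym2.eq_swap.symm, hadj.symm, hA, by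
            rw [show s(x,y) = s(y,x) from Sym2.eq_swap]
            exact hfeq y x hadj.symm hA⟩
    refine ⟨G.edgeFinset.toList.map f, ?_, ?_, ?_, ?_⟩
    · simp
    · intro v
      have hc : ((G.edgeFinset.toList.map f).flatten).count v
          = ∑ e ∈ G.edgeFinset, (f e).count v := by
        rw [List.count_flatten, List.map_map]
        exact Finset.sum_map_toList _ _
      have hterm : ∀ e ∈ G.edgeFinset, (f e).count v = if v ∈ e then 1 else 0 := by
        intro e he
        obtain ⟨x, y, rfl, hadj, hA, hf'⟩ := hfe e he
        rw [hf']
        have hxy : x ≠ y := hadj.ne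
        by_cases h1 : v ∈ s(x, y)
        · rw [if_pos h1]
          rcases Sym2.mem_iff.mp h1 with rfl | rfl
          · simp [List.count_cons, hxy.symm]
          · simp [List.count_cons, hxy]
        · rw [if_neg h1]
          rw [Sym2.mem_iff] at h1
          push_neg at h1
          simp [List.count_cons, Ne.symm h1.1, Ne.symm h1.2]
      rw [hc, Finset.sum_congr rfl hterm, ← Finset.card_filter,
        ← SimpleGraph.incidenceFinset_eq_filter, SimpleGraph.card_incidenceFinset_eq_degree]
      rw [← hmax]
      exact G.degree_le_maxDegree v
    · intro v
      obtain ⟨u, hadj⟩ := (G.degree_pos_iff_exists_adj v).mp (hnoisolated v)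
      have he : s(v, u) ∈ G.edgeFinset := by
        rw [SimpleGraph.mem_edgeFinset, SimpleGraph.mem_edgeSet]; exact hadj
      refine ⟨f s(v, u), List.mem_map_of_mem (Finset.mem_toList.mpr he), ?_⟩
      obtain ⟨x, y, hexy, _, _, hf'⟩ := hfe _ he
      rw [hf']
      have hvm : v ∈ s(x, y) := hexy ▸ Sym2.mem_mk_left v u
      rcases Sym2.mem_iff.mp hvm with rfl | rfl <;> simp
    · intro u v
      constructor
      · intro hA
        have hadj := (horient u v).1 hA
        have he : s(u, v) ∈ G.edgeFinset := by
          rw [SimpleGraph.mem_edgeFinset, SimpleGraph.mem_edgeSet]; exact hadj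
        exact ⟨hadj.ne, f s(u, v), List.mem_map_of_mem (Finset.mem_toList.mpr he),
          [], [], [], by simp [hfeq u v hadj hA]⟩
      · rintro ⟨hne, q, hq, hsb⟩
        obtain ⟨e, he, rfl⟩ := List.mem_map.mp hq
        have he' : e ∈ G.edgeFinset := Finset.mem_toList.mp he
        obtain ⟨x, y, rfl, hadj, hA, hf'⟩ := hfe _ he'
        rw [hf'] at hsb
        obtain ⟨h1, h2⟩ := seqBefore_pair hsb
        rw [← h1, ← h2]
        exact hA
  · rintro k' ℓ' hlt ⟨Q, hlen, hcount, hcover, hiff⟩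
    have L1 : ∀ q ∈ Q, ∀ u ∈ q, ∀ w ∈ q, u ≠ w → G.Adj u w := by
      intro q hq u hu w hw hne
      rcases seqBefore_or hu hw hne with h | h
      · exact (horient u w).1 ((hiff u w).mpr ⟨hne, q, hq, h⟩)
      · exact ((horient w u).1 ((hiff w u).mpr ⟨hne.symm, q, hq, h⟩)).symm
    have L2 : ∀ q ∈ Q, ∀ a ∈ q, ∀ b ∈ q, ∀ c ∈ q, a ≠ b → a ≠ c → b ≠ c → False := by
      intro q hq a ha b hb c hc hab hac hbc
      exact htrianglefree {a, b, c} (SimpleGraph.is3Clique_triple_iff.mpr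
        ⟨L1 q hq a ha b hb hab, L1 q hq a ha c hc hac, L1 q hq b hb c hc hbc⟩)
    have key : ∀ u v : V, G.Adj u v → ∃ q ∈ Q, u ∈ q ∧ v ∈ q := by
      intro u v hadj
      rcases (horient u v).2 hadj with ⟨hA, _⟩ | ⟨hA, _⟩
      · obtain ⟨_, q, hq, hsb⟩ := (hiff u v).mp hA
        exact ⟨q, hq, (seqBefore_mem hsb).1, (seqBefore_mem hsb).2⟩
      · obtain ⟨_, q, hq, hsb⟩ := (hiff v u).mp hA
        exact ⟨q, hq, (seqBefore_mem hsb).2, (seqBefore_mem hsb).1⟩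
    have hends : ∀ e ∈ G.edgeFinset, ∃ x y : V, G.Adj x y ∧ e = s(x, y) := by
      intro e he
      induction e using Sym2.ind with
      | _ x y =>
        exact ⟨x, y, by rwa [SimpleGraph.mem_edgeFinset, SimpleGraph.mem_edgeSet] at he, rfl⟩
    rcases hlt with hk | hl
    · -- too few sequences
      set F : Sym2 V → List V := fun e =>
        if h : ∃ q ∈ Q, ∀ w, w ∈ e → w ∈ q then h.choose else [] with hFdef
      have hF : ∀ e ∈ G.edgeFinset, F e ∈ Q ∧ ∀ w, w ∈ e → w ∈ F e := by
        intro e he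
        obtain ⟨x, y, hadj, rfl⟩ := hends e he
        have hex : ∃ q ∈ Q, ∀ w, w ∈ s(x, y) → w ∈ q := by
          obtain ⟨q, hq, h1, h2⟩ := key x y hadj
          refine ⟨q, hq, fun w hw => ?_⟩
          rcases Sym2.mem_iff.mp hw with rfl | rfl
          exacts [h1, h2]
        rw [hFdef]
        simp only [dif_pos hex]
        exact hex.choose_spec
      have hinj : Set.InjOn F (G.edgeFinset : Set (Sym2 V)) := by
        intro e1 he1 e2 he2 heq
        have he1' : e1 ∈ G.edgeFinset := he1
        have he2' : e2 ∈ G.edgeFinset := he2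
        obtain ⟨x, y, hxy, rfl⟩ := hends e1 he1'
        obtain ⟨a, b, hab, rfl⟩ := hends e2 he2'
        have h1 := hF _ he1'
        have h2 := hF _ he2'
        have hx : x ∈ F s(x, y) := h1.2 x (Sym2.mem_mk_left x y)
        have hy : y ∈ F s(x, y) := h1.2 y (Sym2.mem_mk_right x y)
        have ha : a ∈ F s(x, y) := by rw [heq]; exact h2.2 a (Sym2.mem_mk_left a b)
        have hb : b ∈ F s(x, y) := by rw [heq]; exact h2.2 b (Sym2.mem_mk_right a b)
        have hax : a = x ∨ a = y := by
          by_contra hc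
          push_neg at hc
          exact L2 _ h1.1 a ha x hx y hy hc.1 hc.2 hxy.ne
        have hbx : b = x ∨ b = y := by
          by_contra hc
          push_neg at hc
          exact L2 _ h1.1 b hb x hx y hy hc.1 hc.2 hxy.ne
        have hne : a ≠ b := hab.ne
        rcases hax with rfl | rfl <;> rcases hbx with rfl | rfl <;>
          first
            | rfl
            | exact Sym2.eq_swap
            | exact absurd rfl hne
      have hcard : G.edgeFinset.card ≤ Q.toFinset.card :=
        Finset.card_le_card_of_injOn F
          (fun e he => List.mem_toFinset.mpr (hF e he).1) hinj
      have hQ := Q.toFinset_card_le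
      omega
    · -- sequences too short
      have hVne : Nonempty V := by
        obtain ⟨e, he⟩ := Finset.card_pos.mp (lt_of_lt_of_le (by norm_num) hE)
        obtain ⟨x, y, _, _⟩ := hends e he
        exact ⟨x⟩
      obtain ⟨v, hv⟩ := G.exists_maximal_degree_vertex
      set F2 : V → List V := fun u => if h : ∃ q ∈ Q, u ∈ q ∧ v ∈ q then h.choose else []
        with hF2def
      have hF2 : ∀ u ∈ G.neighborFinset v, F2 u ∈ Q ∧ u ∈ F2 u ∧ v ∈ F2 u := by
        intro u hu
        have hadj : G.Adj u v := ((G.mem_neighborFinset v u).mp hu).symm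
        have hex : ∃ q ∈ Q, u ∈ q ∧ v ∈ q := key u v hadj
        rw [hF2def]
        simp only [dif_pos hex]
        obtain ⟨hq, h1, h2⟩ := hex.choose_spec
        exact ⟨hq, h1, h2⟩
      have hinj2 : Set.InjOn F2 (G.neighborFinset v : Set V) := by
        intro u1 hu1 u2 hu2 heq
        by_contra hne
        have hu1' : u1 ∈ G.neighborFinset v := hu1
        have hu2' : u2 ∈ G.neighborFinset v := hu2
        have h1 := hF2 _ hu1'
        have h2 := hF2 _ hu2'
        have hu1v : u1 ≠ v := ((G.mem_neighborFinset v u1).mp hu1').ne'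
        have hu2v : u2 ≠ v := ((G.mem_neighborFinset v u2).mp hu2').ne'
        have hu2m : u2 ∈ F2 u1 := by rw [heq]; exact h2.2.1
        exact L2 _ h1.1 u1 h1.2.1 u2 hu2m v h1.2.2 hne hu1v hu2v
      have hdeg : G.degree v ≤ (Q.toFinset.filter (fun q => v ∈ q)).card := by
        rw [← SimpleGraph.card_neighborFinset_eq_degree]
        exact Finset.card_le_card_of_injOn F2
          (fun u hu => Finset.mem_filter.mpr
            ⟨List.mem_toFinset.mpr (hF2 u hu).1, (hF2 u hu).2.2⟩) hinj2
      have hcf := count_ge_filter Q v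
      have hcv := hcount v
      have hdl : G.degree v = ℓ := by rw [← hv]; exact hmax
      omega
end
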